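/- Weak diamond property of one-step evaluation: if t⃗ ≻ t⃗₁′ and t⃗ ≻ t⃗₂′, then one of the following holds: (i) t⃗₁′ ≡ t⃗₂′; (ii) t⃗₁′ ≻ t⃗₂′ or t⃗₂′ ≻ t⃗₁′; (iii) there exists a term distribution t⃗″ with t⃗₁′ ≻ t⃗″ and t⃗₂′ ≻ t⃗″. -/

import Mathlib

/-!
Modulo `≡`, a distribution is determined by its coefficient function together with its domain,
the set of pure terms occurring in it even with coefficient `0`: distributions modulo `≡` form a
weak vector space in which every distribution is the sum of `coeff t • t` over its domain.
A step `t⃗ ≻ t⃗′` thus removes weight `a` from a redex `s`, adds `a • s⃗′`, and keeps a rest whose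
domain is that of `t⃗`, with or without `s`. Atomic evaluation is deterministic, so two steps on
the same redex differ only in their weights: if `s` survives in one result, one more step with
the difference of the weights reaches the other, and otherwise the two results are congruent.
Steps on distinct redexes commute and meet in a common reduct.
-/

namespace LinAlg

/-! ### Syntax: pure values, pure terms, term distributions -/

mutual
inductive Val : Type where
  | var : ℕ → Val
  | lam : ℕ → Distr → Val
  | star : Val
  | pair : Val → Val → Val
  | inl : Val → Val
  | inr : Val → Val
inductive Term : Type where
  | val : Val → Term
  | app : Term → Term → Term
  | seq : Term → Distr → Term
  | letp : ℕ → ℕ → Term → Distr → Term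
  | matc : Term → ℕ → Distr → ℕ → Distr → Term
inductive Distr : Type where
  | zero : Distr
  | single : Term → Distr
  | add : Distr → Distr → Distr
  | smul : ℂ → Distr → Distr
end

noncomputable instance : DecidableEq Val := fun _ _ => Classical.dec _
noncomputable instance : DecidableEq Term := fun _ _ => Classical.dec _
noncomputable instance : DecidableEq Distr := fun _ _ => Classical.dec _

/-! ### The shallow congruence ≡ on term distributions -/

inductive Cong : Distr → Distr → Prop where
  | addZero (d : Distr) : Cong (d.add .zero) d
  | oneSmul (d : Distr) : Cong (Distr.smul 1 d) d
  | smulSmul (a b : ℂ) (d : Distr) : Cong (Distr.smul a (Distr.smul b d)) (Distr.smul (a * b) d)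
  | addComm (d₁ d₂ : Distr) : Cong (d₁.add d₂) (d₂.add d₁)
  | addAssoc (d₁ d₂ d₃ : Distr) : Cong ((d₁.add d₂).add d₃) (d₁.add (d₂.add d₃))
  | smulDistrib (a b : ℂ) (d : Distr) : Cong (Distr.smul (a + b) d) ((Distr.smul a d).add (Distr.smul b d))
  | smulAdd (a : ℂ) (d₁ d₂ : Distr) : Cong (Distr.smul a (d₁.add d₂)) ((Distr.smul a d₁).add (Distr.smul a d₂))
  | refl (d : Distr) : Cong d d
  | symm {d₁ d₂ : Distr} : Cong d₁ d₂ → Cong d₂ d₁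
  | trans {d₁ d₂ d₃ : Distr} : Cong d₁ d₂ → Cong d₂ d₃ → Cong d₁ d₃
  | addCongr {d₁ d₁' d₂ d₂' : Distr} : Cong d₁ d₁' → Cong d₂ d₂' → Cong (d₁.add d₂) (d₁'.add d₂')
  | smulCongr (a : ℂ) {d d' : Distr} : Cong d d' → Cong (Distr.smul a d) (Distr.smul a d')

/-! ### Free variables -/

mutual
def fvV : Val → Finset ℕ
  | .var y => {y}
  | .lam y b => fvD b \ {y}
  | .star => ∅
  | .pair v₁ v₂ => fvV v₁ ∪ fvV v₂
  | .inl v => fvV v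
  | .inr v => fvV v
def fvT : Term → Finset ℕ
  | .val v => fvV v
  | .app s t => fvT s ∪ fvT t
  | .seq t s => fvT t ∪ fvD s
  | .letp y z t s => fvT t ∪ (fvD s \ {y, z})
  | .matc t y s₁ z s₂ => fvT t ∪ (fvD s₁ \ {y}) ∪ (fvD s₂ \ {z})
def fvD : Distr → Finset ℕ
  | .zero => ∅
  | .single t => fvT t
  | .add d₁ d₂ => fvD d₁ ∪ fvD d₂
  | .smul _ d => fvD d
end

/-! ### Pure substitution -/

mutual
def substV (x : ℕ) (w : Val) : Val → Val
  | .var y => if y = x then w else .var y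
  | .lam y b => if y = x then .lam y b else .lam y (substD x w b)
  | .star => .star
  | .pair v₁ v₂ => .pair (substV x w v₁) (substV x w v₂)
  | .inl v => .inl (substV x w v)
  | .inr v => .inr (substV x w v)
def substT (x : ℕ) (w : Val) : Term → Term
  | .val v => .val (substV x w v)
  | .app s t => .app (substT x w s) (substT x w t)
  | .seq t s => .seq (substT x w t) (substD x w s)
  | .letp y z t s =>
      .letp y z (substT x w t) (if y = x ∨ z = x then s else substD x w s)
  | .matc t y s₁ z s₂ =>
      .matc (substT x w t) y (if y = x then s₁ else substD x w s₁)
        z (if z = x then s₂ else substD x w s₂)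
def substD (x : ℕ) (w : Val) : Distr → Distr
  | .zero => .zero
  | .single t => .single (substT x w t)
  | .add d₁ d₂ => .add (substD x w d₁) (substD x w d₂)
  | .smul a d => .smul a (substD x w d)
end

/-! ### Linear extensions of the syntactic constructs -/

def appTD (s : Term) : Distr → Distr
  | .zero => .zero
  | .single t => .single (.app s t)
  | .add d₁ d₂ => .add (appTD s d₁) (appTD s d₂)
  | .smul a d => .smul a (appTD s d)

def appDV : Distr → Val → Distr
  | .zero, _ => .zero
  | .single t, v => .single (.app t (.val v))
  | .add d₁ d₂, v => .add (appDV d₁ v) (appDV d₂ v)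
  | .smul a d, v => .smul a (appDV d v)

def seqD : Distr → Distr → Distr
  | .zero, _ => .zero
  | .single t, s => .single (.seq t s)
  | .add d₁ d₂, s => .add (seqD d₁ s) (seqD d₂ s)
  | .smul a d, s => .smul a (seqD d s)

def letpD (x y : ℕ) : Distr → Distr → Distr
  | .zero, _ => .zero
  | .single t, s => .single (.letp x y t s)
  | .add d₁ d₂, s => .add (letpD x y d₁ s) (letpD x y d₂ s)
  | .smul a d, s => .smul a (letpD x y d s)

def matcD : Distr → ℕ → Distr → ℕ → Distr → Distr
  | .zero, _, _, _, _ => .zero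
  | .single t, y, s₁, z, s₂ => .single (.matc t y s₁ z s₂)
  | .add d₁ d₂, y, s₁, z, s₂ => .add (matcD d₁ y s₁ z s₂) (matcD d₂ y s₁ z s₂)
  | .smul a d, y, s₁, z, s₂ => .smul a (matcD d y s₁ z s₂)

/-- Bilinear application of distributions:  (Σᵢ αᵢ·tᵢ)(Σⱼ βⱼ·sⱼ) = Σᵢⱼ αᵢβⱼ·(tᵢ sⱼ). -/
def appD : Distr → Distr → Distr
  | .zero, _ => .zero
  | .single t, w => appTD t w
  | .add d₁ d₂, w => .add (appD d₁ w) (appD d₂ w)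
  | .smul a d, w => .smul a (appD d w)

/-- Bilinear substitution  d⟨x := w⃗⟩ = Σⱼ βⱼ · d[x := wⱼ]  (recursion on the value
distribution w⃗; non-value summands are junk and are sent to 0⃗). -/
def bsubst (x : ℕ) (d : Distr) : Distr → Distr
  | .zero => .zero
  | .single (.val w) => substD x w d
  | .single _ => .zero
  | .add w₁ w₂ => .add (bsubst x d w₁) (bsubst x d w₂)
  | .smul a w => .smul a (bsubst x d w)

/-! ### Evaluation -/

inductive Atom : Term → Distr → Prop where
  | beta (x : ℕ) (b : Distr) (v : Val) :
      Atom (.app (.val (.lam x b)) (.val v)) (substD x v b)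
  | seqStar (s : Distr) : Atom (.seq (.val .star) s) s
  | letPair (x y : ℕ) (v w : Val) (s : Distr) :
      Atom (.letp x y (.val (.pair v w)) s) (substD y w (substD x v s))
  | matchInl (v : Val) (y : ℕ) (s₁ : Distr) (z : ℕ) (s₂ : Distr) :
      Atom (.matc (.val (.inl v)) y s₁ z s₂) (substD y v s₁)
  | matchInr (v : Val) (y : ℕ) (s₁ : Distr) (z : ℕ) (s₂ : Distr) :
      Atom (.matc (.val (.inr v)) y s₁ z s₂) (substD z v s₂)
  | appR (s : Term) {t : Term} {d : Distr} : Atom t d → Atom (.app s t) (appTD s d)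
  | appL (v : Val) {t : Term} {d : Distr} : Atom t d → Atom (.app t (.val v)) (appDV d v)
  | seqC (s : Distr) {t : Term} {d : Distr} : Atom t d → Atom (.seq t s) (seqD d s)
  | letC (x y : ℕ) (s : Distr) {t : Term} {d : Distr} :
      Atom t d → Atom (.letp x y t s) (letpD x y d s)
  | matcC (y : ℕ) (s₁ : Distr) (z : ℕ) (s₂ : Distr) {t : Term} {d : Distr} :
      Atom t d → Atom (.matc t y s₁ z s₂) (matcD d y s₁ z s₂)

/-- One-step evaluation:  t⃗ ≻ t⃗′. -/
def Step (d d' : Distr) : Prop :=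
  ∃ (a : ℂ) (s : Term) (s' r : Distr),
    Cong d (Distr.add (.smul a (.single s)) r) ∧
    Cong d' (Distr.add (.smul a s') r) ∧ Atom s s'

/-- Evaluation  t⃗ ≻≻ t⃗′:  reflexive-transitive closure of one-step evaluation. -/
def Eval : Distr → Distr → Prop := Relation.ReflTransGen Step

/-! ### Value distributions, inner product, norm -/

def IsValT : Term → Prop
  | .val _ => True
  | _ => False

def IsValD : Distr → Prop
  | .zero => True
  | .single t => IsValT t
  | .add d₁ d₂ => IsValD d₁ ∧ IsValD d₂
  | .smul _ d => IsValD d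

/-- The set of closed value distributions. -/
def ClosedValD : Set Distr := {d | IsValD d ∧ fvD d = ∅}

/-- Total coefficient of the pure term `t` in the distribution `d`. -/
noncomputable def coeff : Distr → Term → ℂ
  | .zero, _ => 0
  | .single s, t => if s = t then 1 else 0
  | .add d₁ d₂, t => coeff d₁ t + coeff d₂ t
  | .smul a d, t => a * coeff d t

/-- The domain of a distribution (all pure terms occurring in it, even with
coefficient 0). -/
noncomputable def domD : Distr → Finset Term
  | .zero => ∅
  | .single t => {t}
  | .add d₁ d₂ => domD d₁ ∪ domD d₂
  | .smul _ d => domD d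

/-- The inner product ⟨v⃗|w⃗⟩ on value distributions. -/
noncomputable def innerD (v w : Distr) : ℂ :=
  ∑ t ∈ domD v, (starRingEnd ℂ) (coeff v t) * coeff w t

/-- The pseudo-ℓ²-norm ‖v⃗‖. -/
noncomputable def normD (v : Distr) : ℝ := Real.sqrt (innerD v v).re

/-- The unit sphere S of closed value distributions of norm 1. -/
def Sphere : Set Distr := {d | d ∈ ClosedValD ∧ normD d = 1}

/-- Span(X): weak linear combinations of elements of X (taken modulo ≡). -/
inductive Span (X : Set Distr) : Distr → Prop where
  | mem {d : Distr} : d ∈ X → Span X d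
  | zero : Span X .zero
  | add {d₁ d₂ : Distr} : Span X d₁ → Span X d₂ → Span X (d₁.add d₂)
  | smul (a : ℂ) {d : Distr} : Span X d → Span X (Distr.smul a d)
  | congr {d d' : Distr} : Span X d → Cong d d' → Span X d'

/-! ### Realizability: unitary types -/

/-- t⃗ ⊩ A :  t⃗ evaluates to some vector of ⟦A⟧. -/
def Realizes (A : Set Distr) (t : Distr) : Prop := ∃ v ∈ A, Eval t v

/-- |A| : the set of (closed) realizers of A. -/
def realizersOf (A : Set Distr) : Set Distr := {t | fvD t = ∅ ∧ Realizes A t}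

/-! ### Type constructors -/

def UnitT : Set Distr := {Distr.single (.val .star)}

/-- ♭A : the basis of A. -/
def flatT (X : Set Distr) : Set Distr :=
  {e | ∃ d ∈ X, ∃ v : Val, (Term.val v) ∈ domD d ∧ e = Distr.single (.val v)}

/-- ♯A : the unitary span of A. -/
def sharpT (X : Set Distr) : Set Distr := {d | Span X d ∧ d ∈ Sphere}

/-- Linear extension of a value constructor. -/
def mapVD (f : Val → Val) : Distr → Distr
  | .zero => .zero
  | .single (.val v) => .single (.val (f v))
  | .single t => .single t
  | .add d₁ d₂ => .add (mapVD f d₁) (mapVD f d₂)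
  | .smul a d => .smul a (mapVD f d)

def inlD : Distr → Distr := mapVD Val.inl
def inrD : Distr → Distr := mapVD Val.inr

/-- Bilinear extension of pairing. -/
def pairD : Distr → Distr → Distr
  | .zero, _ => .zero
  | .single (.val v), w => mapVD (Val.pair v) w
  | .single t, _ => .single t
  | .add d₁ d₂, w => .add (pairD d₁ w) (pairD d₂ w)
  | .smul a d, w => .smul a (pairD d w)

/-- A + B (simple sum). -/
def plusT (A B : Set Distr) : Set Distr :=
  {d | (∃ v ∈ A, d = inlD v) ∨ (∃ w ∈ B, d = inrD w)}

/-- A × B (simple product). -/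
def timesT (A B : Set Distr) : Set Distr :=
  {d | ∃ v ∈ A, ∃ w ∈ B, d = pairD v w}

/-- A → B (pure arrow). -/
def arrowT (A B : Set Distr) : Set Distr :=
  {d | ∃ (x : ℕ) (b : Distr), d = Distr.single (.val (.lam x b)) ∧ fvD d = ∅ ∧
      ∀ v ∈ A, Realizes B (bsubst x b v)}

/-- Σᵢ αᵢ · λx.t⃗ᵢ  ↦  Σᵢ αᵢ · t⃗ᵢ  (strips the λx in front of each summand). -/
def stripLam (x : ℕ) : Distr → Distr
  | .zero => .zero
  | .single (.val (.lam y b)) => if y = x then b else .single (.val (.lam y b))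
  | .single t => .single t
  | .add d₁ d₂ => .add (stripLam x d₁) (stripLam x d₂)
  | .smul a d => .smul a (stripLam x d)

/-- A ⇒ B (unitary arrow). -/
def uarrowT (A B : Set Distr) : Set Distr :=
  {d | d ∈ Sphere ∧ ∃ x : ℕ,
      (∀ t ∈ domD d, ∃ b : Distr, t = Term.val (.lam x b)) ∧
      ∀ v ∈ A, Realizes B (bsubst x (stripLam x d) v)}

/-! ### Booleans -/

def ttD : Distr := .single (.val (.inl .star))
def ffD : Distr := .single (.val (.inr .star))

/-- 𝔹 = 𝕌 + 𝕌. -/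
def BoolT : Set Distr := plusT UnitT UnitT

/-- ♯𝔹, the type of unitary Booleans. -/
def sharpBool : Set Distr := sharpT BoolT

/-- Boolean projection π : Span({tt,ff}) → ℂ². -/
noncomputable def piB (d : Distr) : ℂ × ℂ :=
  (coeff d (.val (.inl .star)), coeff d (.val (.inr .star)))

/-- t⃗ represents the operator F : ℂ² → ℂ². -/
def Represents (td : Distr) (F : ℂ × ℂ → ℂ × ℂ) : Prop :=
  ∀ v, Span BoolT v → ∃ w, Span BoolT w ∧ Eval (appD td v) w ∧ piB w = F (piB v)

/-- Hermitian inner product on ℂ². -/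
def hinner (u v : ℂ × ℂ) : ℂ :=
  (starRingEnd ℂ) u.1 * v.1 + (starRingEnd ℂ) u.2 * v.2

/-- A unitary operator on ℂ². -/
def IsUnitaryOp (F : ℂ × ℂ → ℂ × ℂ) : Prop :=
  ∀ u v : ℂ × ℂ, hinner (F u) (F v) = hinner u v

/-! ### Typing contexts, substitutions, judgments -/

abbrev Ctx := List (ℕ × Set Distr)
abbrev Subst := List (ℕ × Distr)

/-- Applying a substitution, one bilinear substitution at a time. -/
def applySub : Distr → Subst → Distr
  | d, [] => d
  | d, (x, w) :: σ => applySub (bsubst x d w) σ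

/-- σ ∈ ⟦Γ⟧. -/
def SubMem (σ : Subst) (Γ : Ctx) : Prop :=
  List.Forall₂ (fun p q => p.1 = q.1 ∧ p.2 ∈ q.2) σ Γ

def ctxDom (Γ : Ctx) : Set ℕ := {x | ∃ A, (x, A) ∈ Γ}

/-- dom♯(Γ): the variables of Γ whose type is not a pure-value type. -/
def ctxDomSharp (Γ : Ctx) : Set ℕ := {x | ∃ A, (x, A) ∈ Γ ∧ flatT A ≠ A}

/-- All the types of the context are unitary types (subsets of the sphere). -/
def CtxUnitary (Γ : Ctx) : Prop := ∀ p ∈ Γ, p.2 ⊆ Sphere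

/-- Validity of the typing judgment  Γ ⊢ t⃗ : A. -/
def ValidJ (Γ : Ctx) (t : Distr) (A : Set Distr) : Prop :=
  ctxDomSharp Γ ⊆ (fvD t : Set ℕ) ∧ (fvD t : Set ℕ) ⊆ ctxDom Γ ∧
  ∀ σ : Subst, SubMem σ Γ → Realizes A (applySub t σ)

/-- Validity of the orthogonality judgment  Γ | Δ₁ ⊢ t⃗₁ ⊥ Δ₂ ⊢ t⃗₂ : A. -/
def OrthoJ (Γ Δ₁ Δ₂ : Ctx) (t₁ t₂ : Distr) (A : Set Distr) : Prop :=
  ValidJ (Γ ++ Δ₁) t₁ A ∧ ValidJ (Γ ++ Δ₂) t₂ A ∧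
  ∀ σ σ₁ σ₂ : Subst, SubMem σ Γ → SubMem σ₁ Δ₁ → SubMem σ₂ Δ₂ →
    ∀ v₁ v₂ : Distr, v₁ ∈ ClosedValD → v₂ ∈ ClosedValD →
      Eval (applySub t₁ (σ ++ σ₁)) v₁ → Eval (applySub t₂ (σ ++ σ₂)) v₂ →
      innerD v₁ v₂ = 0

end LinAlg

namespace LinAlg

theorem coeff_eq_zero_of_notMem : ∀ {d : Distr} {t : Term}, t ∉ domD d → coeff d t = 0
  | .zero, _, _ => rfl
  | .single s, t, h => by simp_all [coeff, domD, eq_comm]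
  | .add d₁ d₂, _, h => by
      simp only [domD, Finset.mem_union, not_or] at h
      simp [coeff, coeff_eq_zero_of_notMem h.1, coeff_eq_zero_of_notMem h.2]
  | .smul _ d, _, h => by simp [coeff, coeff_eq_zero_of_notMem (d := d) h]

theorem Cong.coeff_eq {d e : Distr} (h : Cong d e) : coeff d = coeff e := by
  induction h with
  | refl => rfl
  | symm _ ih => exact ih.symm
  | trans _ _ ih₁ ih₂ => exact ih₁.trans ih₂
  | addCongr _ _ ih₁ ih₂ => funext t; simp [coeff, ih₁, ih₂]
  | smulCongr _ _ ih => funext t; simp [coeff, ih]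
  | _ => funext t; simp only [coeff]; ring

theorem Cong.domD_eq {d e : Distr} (h : Cong d e) : domD d = domD e := by
  induction h with
  | addComm => exact Finset.union_comm _ _
  | addAssoc => exact Finset.union_assoc _ _ _
  | symm _ ih => exact ih.symm
  | trans _ _ ih₁ ih₂ => exact ih₁.trans ih₂
  | addCongr _ _ ih₁ ih₂ => simp [domD, ih₁, ih₂]
  | smulCongr _ _ ih => simp [domD, ih]
  | _ => simp [domD]

instance Distr.setoid : Setoid Distr := ⟨Cong, ⟨Cong.refl, Cong.symm, Cong.trans⟩⟩

/-- Distributions modulo `≡`. All module laws hold except `0 • x = 0` (the domain remembers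
terms with coefficient `0`), hence a `DistribMulAction` and not a `Module`. -/
abbrev WeakVec : Type := Quotient Distr.setoid

namespace WeakVec

instance : Zero WeakVec := ⟨⟦.zero⟧⟩

instance : Add WeakVec := ⟨Quotient.map₂ Distr.add fun _ _ h₁ _ _ h₂ => h₁.addCongr h₂⟩

instance : SMul ℂ WeakVec := ⟨fun a => Quotient.map (Distr.smul a) fun _ _ h => h.smulCongr a⟩

theorem mk_add (d e : Distr) : (⟦d.add e⟧ : WeakVec) = ⟦d⟧ + ⟦e⟧ := rfl

theorem mk_smul (a : ℂ) (d : Distr) : (⟦.smul a d⟧ : WeakVec) = a • ⟦d⟧ := rfl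

instance : AddCommMonoid WeakVec where
  add_assoc := by rintro ⟨x⟩ ⟨y⟩ ⟨z⟩; exact Quotient.sound (Cong.addAssoc x y z)
  zero_add := by rintro ⟨x⟩; exact Quotient.sound ((Cong.addComm _ x).trans (Cong.addZero x))
  add_zero := by rintro ⟨x⟩; exact Quotient.sound (Cong.addZero x)
  add_comm := by rintro ⟨x⟩ ⟨y⟩; exact Quotient.sound (Cong.addComm x y)
  nsmul := nsmulRec

instance : MulAction ℂ WeakVec where
  one_smul := by rintro ⟨x⟩; exact Quotient.sound (Cong.oneSmul x)
  mul_smul a b := by rintro ⟨x⟩; exact Quotient.sound (Cong.smulSmul a b x).symm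

protected theorem add_smul (a b : ℂ) (x : WeakVec) : (a + b) • x = a • x + b • x := by
  induction x using Quotient.ind
  exact Quotient.sound (Cong.smulDistrib a b _)

instance : DistribMulAction ℂ WeakVec where
  smul_zero a := by
    have h : (0 : ℂ) • (0 : WeakVec) = 0 := by
      calc (0 : ℂ) • (0 : WeakVec) = (1 : ℂ) • 0 + (0 : ℂ) • 0 := by rw [one_smul, zero_add]
        _ = 0 := by rw [← WeakVec.add_smul, add_zero, one_smul]
    rw [← h, smul_smul, mul_zero]
  smul_add a := by rintro ⟨x⟩ ⟨y⟩; exact Quotient.sound (Cong.smulAdd a x y)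

theorem mk_eq_sum : ∀ d : Distr, (⟦d⟧ : WeakVec) = ∑ t ∈ domD d, coeff d t • ⟦.single t⟧
  | .zero => rfl
  | .single t => by simp [domD, coeff]
  | .smul a d => by simp [domD, coeff, mk_smul, mk_eq_sum d, Finset.smul_sum, smul_smul]
  | .add d₁ d₂ => by
      have restrict (d : Distr) (hd : domD d ⊆ domD (d₁.add d₂)) :
          ∑ t ∈ domD d, coeff d t • (⟦.single t⟧ : WeakVec) =
            ∑ t ∈ domD (d₁.add d₂), if t ∈ domD d then coeff d t • ⟦.single t⟧ else 0 := by
        rw [Finset.sum_ite_mem, Finset.inter_eq_right.2 hd]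
      rw [mk_add, mk_eq_sum d₁, mk_eq_sum d₂, restrict d₁ Finset.subset_union_left,
        restrict d₂ Finset.subset_union_right, ← Finset.sum_add_distrib]
      refine Finset.sum_congr rfl fun t ht => ?_
      by_cases h₁ : t ∈ domD d₁ <;> by_cases h₂ : t ∈ domD d₂ <;>
        simp_all [coeff, domD, coeff_eq_zero_of_notMem, WeakVec.add_smul]

end WeakVec

theorem cong_iff {d e : Distr} : Cong d e ↔ coeff d = coeff e ∧ domD d = domD e := by
  refine ⟨fun h => ⟨h.coeff_eq, h.domD_eq⟩, fun ⟨hc, hd⟩ => Quotient.exact (s := Distr.setoid) ?_⟩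
  rw [WeakVec.mk_eq_sum, WeakVec.mk_eq_sum, hc, hd]

theorem exists_coeff_domD_eq (D : Finset Term) :
    ∀ f : Term → ℂ, (∀ t ∉ D, f t = 0) → ∃ d, coeff d = f ∧ domD d = D := by
  induction D using Finset.induction_on with
  | empty => exact fun f hf => ⟨.zero, funext fun t => (hf t (by simp)).symm, rfl⟩
  | insert s D hs ih =>
    intro f hf
    obtain ⟨d, hc, hd⟩ := ih (Function.update f s 0) fun t ht => by
      by_cases hts : t = s <;> simp_all
    refine ⟨.add (.smul (f s) (.single s)) d, funext fun t => ?_, by simp [domD, hd]⟩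
    by_cases hts : t = s <;> simp_all [coeff, eq_comm]

theorem Atom.not_val {v : Val} {d : Distr} (h : Atom (.val v) d) : False := by
  cases h

theorem Atom.eq {s : Term} {d d' : Distr} (h : Atom s d) (h' : Atom s d') : d = d' := by
  induction h generalizing d' <;> cases h' <;> first
    | rfl
    | exact (Atom.not_val ‹_›).elim
    | grind

/-- `t ≡ a·s + r` and `t' ≡ a·s' + r` with `Atom s s'`, read through coefficients and domains;
`R` is the domain of the rest `r`. -/
structure Contraction (t t' : Distr) (a : ℂ) (s : Term) (s' : Distr) (R : Finset Term) :
    Prop where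
  atom : Atom s s'
  domD_src : domD t = insert s R
  coeff_src : ∀ x ∉ R, coeff t x = (Pi.single s a : Term → ℂ) x
  coeff_tgt : coeff t' = coeff t - Pi.single s a + a • coeff s'
  domD_tgt : domD t' = domD s' ∪ R

theorem Step.exists_contraction {t t' : Distr} (h : Step t t') :
    ∃ a s s' R, Contraction t t' a s s' R := by
  obtain ⟨a, s, s', r, h, h', hs⟩ := h
  rw [cong_iff] at h h'
  have hcoeff : coeff t = Pi.single s a + coeff r := by
    rw [h.1]; funext x; simp [coeff, Pi.single_apply, eq_comm]
  refine ⟨a, s, s', domD r, hs, by simp [h.2, domD], fun x hx => ?_, ?_, by simp [h'.2, domD]⟩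
  · simp [hcoeff, coeff_eq_zero_of_notMem hx]
  · rw [h'.1, hcoeff]; funext x; simp [coeff]; ring

theorem Contraction.step {t t' : Distr} {a : ℂ} {s : Term} {s' : Distr} {R : Finset Term}
    (h : Contraction t t' a s s' R) : Step t t' := by
  obtain ⟨r, hc, hd⟩ := exists_coeff_domD_eq R (coeff t - Pi.single s a) fun x hx => by
    simp [h.coeff_src x hx]
  refine ⟨a, s, s', r, cong_iff.2 ⟨?_, ?_⟩, cong_iff.2 ⟨?_, ?_⟩, h.atom⟩
  · funext x; simp [coeff, hc, Pi.single_apply, eq_comm]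
  · simp [h.domD_src, domD, hd]
  · rw [h.coeff_tgt]; funext x; simp [coeff, hc]; ring
  · simp [h.domD_tgt, domD, hd]

namespace Contraction

variable {t t₁ t₂ : Distr} {a b : ℂ} {s u : Term} {s' u' : Distr} {R₁ R₂ : Finset Term}

theorem redex_mem (h : Contraction t t₁ a s s' R₁) : s ∈ domD t := by
  simp [h.domD_src]

theorem mem_rest (h : Contraction t t₁ a s s' R₁) {x : Term} (hx : x ∈ domD t) (hxs : x ≠ s) :
    x ∈ R₁ := by
  simpa [h.domD_src, hxs] using hx

theorem of_redex_mem (h₁ : Contraction t t₁ a s s' R₁) (h₂ : Contraction t t₂ b s s' R₂)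
    (hs : s ∈ domD t₁) : Contraction t₁ t₂ (b - a) s s' (domD t₂) where
  atom := h₁.atom
  domD_src := by
    have hR := h₁.domD_src.symm.trans h₂.domD_src
    rw [h₁.domD_tgt] at hs ⊢
    rw [h₂.domD_tgt]
    simp only [Finset.ext_iff, Finset.mem_insert, Finset.mem_union] at hR ⊢
    grind
  coeff_src x hx := by
    rw [h₂.domD_tgt, Finset.mem_union, not_or] at hx
    rw [h₁.coeff_tgt]
    simp [coeff_eq_zero_of_notMem hx.1, h₂.coeff_src x hx.2, Pi.single_sub]
  coeff_tgt := by
    rw [h₁.coeff_tgt, h₂.coeff_tgt, Pi.single_sub]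
    module
  domD_tgt := by rw [h₂.domD_tgt, ← Finset.union_assoc, Finset.union_self]

theorem cong_of_redex_notMem (h₁ : Contraction t t₁ a s s' R₁) (h₂ : Contraction t t₂ b s s' R₂)
    (hs₁ : s ∉ domD t₁) (hs₂ : s ∉ domD t₂) : Cong t₁ t₂ := by
  rw [h₁.domD_tgt, Finset.mem_union, not_or] at hs₁
  rw [h₂.domD_tgt, Finset.mem_union, not_or] at hs₂
  have hab : a = b := by simpa using (h₁.coeff_src s hs₁.2).symm.trans (h₂.coeff_src s hs₂.2)
  have hR : R₁ = R₂ := by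
    rw [← Finset.erase_insert hs₁.2, ← Finset.erase_insert hs₂.2, ← h₁.domD_src, h₂.domD_src]
  rw [cong_iff, h₁.coeff_tgt, h₂.coeff_tgt, h₁.domD_tgt, h₂.domD_tgt, hab, hR]
  exact ⟨rfl, rfl⟩

theorem coeff_eq_of_redex_ne (h₁ : Contraction t t₁ a s s' R₁) (h₂ : Contraction t t₂ b u u' R₂)
    (hsu : s ≠ u) {x : Term} (hx : x ∉ domD s' ∪ (R₁ ∩ R₂)) :
    coeff t₁ x = (Pi.single u b : Term → ℂ) x := by
  have hu : u ∈ R₁ := h₁.mem_rest h₂.redex_mem hsu.symm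
  have hs : s ∈ R₂ := h₂.mem_rest h₁.redex_mem hsu
  simp only [Finset.mem_union, Finset.mem_inter, not_or, not_and] at hx
  rw [h₁.coeff_tgt]
  by_cases hx₁ : x ∈ R₁
  · have hxs : x ≠ s := by rintro rfl; exact hx.2 hx₁ hs
    simp [coeff_eq_zero_of_notMem hx.1, h₂.coeff_src x (hx.2 hx₁), hxs]
  · have hxu : x ≠ u := by rintro rfl; exact hx₁ hu
    simp [coeff_eq_zero_of_notMem hx.1, h₁.coeff_src x hx₁, hxu]

theorem join (h₁ : Contraction t t₁ a s s' R₁) (h₂ : Contraction t t₂ b u u' R₂) (hsu : s ≠ u)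
    {t'' : Distr} (hc : coeff t'' = coeff t₁ + coeff t₂ - coeff t)
    (hd : domD t'' = domD s' ∪ domD u' ∪ (R₁ ∩ R₂)) :
    Contraction t₁ t'' b u u' (domD s' ∪ (R₁ ∩ R₂)) where
  atom := h₂.atom
  domD_src := by
    have hu : u ∈ R₁ := h₁.mem_rest h₂.redex_mem hsu.symm
    have hR := h₁.domD_src.symm.trans h₂.domD_src
    rw [h₁.domD_tgt]
    simp only [Finset.ext_iff, Finset.mem_insert, Finset.mem_union, Finset.mem_inter] at hR ⊢
    grind
  coeff_src _ hx := h₁.coeff_eq_of_redex_ne h₂ hsu hx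
  coeff_tgt := by
    rw [hc, h₁.coeff_tgt, h₂.coeff_tgt]
    abel
  domD_tgt := by
    rw [hd, Finset.union_comm (domD s'), Finset.union_assoc]

theorem exists_join (h₁ : Contraction t t₁ a s s' R₁) (h₂ : Contraction t t₂ b u u' R₂)
    (hsu : s ≠ u) : ∃ t'', Contraction t₁ t'' b u u' (domD s' ∪ (R₁ ∩ R₂)) ∧
      Contraction t₂ t'' a s s' (domD u' ∪ (R₂ ∩ R₁)) := by
  obtain ⟨t'', hc, hd⟩ := exists_coeff_domD_eq (domD s' ∪ domD u' ∪ (R₁ ∩ R₂))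
    (coeff t₁ + coeff t₂ - coeff t) fun x hx => by
      simp only [Finset.mem_union, not_or] at hx
      have hx₁ : x ∉ domD s' ∪ (R₁ ∩ R₂) := by simp [hx.1.1, hx.2]
      simp [h₁.coeff_eq_of_redex_ne h₂ hsu hx₁, h₂.coeff_tgt, coeff_eq_zero_of_notMem hx.1.2]
  refine ⟨t'', h₁.join h₂ hsu hc hd, h₂.join h₁ hsu.symm ?_ ?_⟩
  · rw [hc, add_comm (coeff t₁)]
  · rw [hd, Finset.union_comm (domD s'), Finset.inter_comm]

end Contraction

/-- Weak diamond property of one-step evaluation. -/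
theorem weak_diamond {t t₁' t₂' : Distr} (h₁ : Step t t₁') (h₂ : Step t t₂') :
    Cong t₁' t₂' ∨ (Step t₁' t₂' ∨ Step t₂' t₁') ∨
      ∃ t'' : Distr, Step t₁' t'' ∧ Step t₂' t'' := by
  obtain ⟨a, s, s', R₁, c₁⟩ := h₁.exists_contraction
  obtain ⟨b, u, u', R₂, c₂⟩ := h₂.exists_contraction
  by_cases hsu : s = u
  · subst hsu
    obtain rfl := c₁.atom.eq c₂.atom
    by_cases hs₁ : s ∈ domD t₁'
    · exact .inr (.inl (.inl (c₁.of_redex_mem c₂ hs₁).step))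
    by_cases hs₂ : s ∈ domD t₂'
    · exact .inr (.inl (.inr (c₂.of_redex_mem c₁ hs₂).step))
    exact .inl (c₁.cong_of_redex_notMem c₂ hs₁ hs₂)
  · obtain ⟨t'', c₁'', c₂''⟩ := c₁.exists_join c₂ hsu
    exact .inr (.inr ⟨t'', c₁''.step, c₂''.step⟩)

end LinAlg
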